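/- arXiv:2003.04485 — 4 statements merged into one kernel-verified Lean document; each statement's English description precedes it below -/
import Mathlib

section
/- Let U and V be Hilbert spaces, b : U × V → ℝ a bilinear form, and ‖·‖_{V,ω} a norm on V equivalent to ‖·‖_V. Suppose there exist constants M_ω > 0 and γ_ω > 0 such that γ_ω‖u‖_U ≤ sup_{v∈V, v≠0} |b(u,v)|/‖v‖_{V,ω} ≤ M_ω‖u‖_U for all u ∈ U. If ℓ ∈ V* satisfies ⟨ℓ,v⟩ = 0 for all v ∈ V with b(·,v) = 0 in U*, then there exists a unique u ∈ U with b(u,v) = ⟨ℓ,v⟩ for all v ∈ V. -/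
open InnerProductSpace

/-- Well-posedness of the continuous problem (Theorem 2.1). -/
theorem stmt0
    {U V : Type*} [NormedAddCommGroup U] [InnerProductSpace ℝ U] [CompleteSpace U]
    [NormedAddCommGroup V] [InnerProductSpace ℝ V] [CompleteSpace V]
    (b : U →ₗ[ℝ] V →ₗ[ℝ] ℝ)
    (Nω : V → ℝ)
    (C₁ C₂ : ℝ) (hC₁ : 0 < C₁) (hC₂ : 0 < C₂)
    (hequiv : ∀ v : V, C₁ * Nω v ≤ ‖v‖ ∧ ‖v‖ ≤ C₂ * Nω v)
    (M γ : ℝ) (hM : 0 < M) (hγ : 0 < γ)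
    (hlow : ∀ u : U, γ * ‖u‖ ≤ ⨆ v : {v : V // v ≠ 0}, |b u v.1| / Nω v.1)
    (hup : ∀ (u : U) (v : V), v ≠ 0 → |b u v| / Nω v ≤ M * ‖u‖)
    (ℓ : V →L[ℝ] ℝ)
    (hℓ : ∀ v : V, (∀ u : U, b u v = 0) → ℓ v = 0) :
    ∃! u : U, ∀ v : V, b u v = ℓ v := by
  -- positivity of Nω on nonzero vectors
  have hNpos : ∀ v : V, v ≠ 0 → 0 < Nω v := by
    intro v hv
    have h2 := (hequiv v).2
    have hv' : 0 < ‖v‖ := norm_pos_iff.mpr hv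
    nlinarith
  -- boundedness of b
  have hb : ∀ u : U, ∀ v : V, ‖b u v‖ ≤ (M / C₁ * ‖u‖) * ‖v‖ := by
    intro u v
    rcases eq_or_ne v 0 with rfl | hv
    · simp
    · have hN := hNpos v hv
      have h1 := hup u v hv
      have h2 := (hequiv v).1
      have h3 : |b u v| ≤ M * ‖u‖ * Nω v := by
        rw [div_le_iff₀ hN] at h1; linarith
      rw [Real.norm_eq_abs]
      rw [div_mul_eq_mul_div, div_mul_eq_mul_div, le_div_iff₀ hC₁]
      nlinarith [mul_le_mul_of_nonneg_right h3 hC₁.le,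
        mul_le_mul_of_nonneg_left h2 (mul_nonneg hM.le (norm_nonneg u))]
  -- the continuous functional b u
  let Bc : U → (V →L[ℝ] ℝ) := fun u =>
    LinearMap.mkContinuous (b u) (M / C₁ * ‖u‖) (hb u)
  have hBc : ∀ u v, Bc u v = b u v := fun u v => rfl
  -- Riesz representation operator
  let A0 : U → V := fun u => (toDual ℝ V).symm (Bc u)
  have hA0 : ∀ u v, ⟪A0 u, v⟫_ℝ = b u v := by
    intro u v
    simp only [A0, toDual_symm_apply]
    exact hBc u v
  have hadd : ∀ u u' : U, A0 (u + u') = A0 u + A0 u' := by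
    intro u u'
    apply ext_inner_right ℝ
    intro v
    simp [hA0, inner_add_left]
  have hsmul : ∀ (c : ℝ) (u : U), A0 (c • u) = c • A0 u := by
    intro c u
    apply ext_inner_right ℝ
    intro v
    simp [hA0, inner_smul_left]
  let Alin : U →ₗ[ℝ] V := { toFun := A0, map_add' := hadd, map_smul' := hsmul }
  have hAnorm : ∀ u, ‖Alin u‖ ≤ (M / C₁) * ‖u‖ := by
    intro u
    have h1 : ‖Alin u‖ = ‖Bc u‖ := by
      show ‖(toDual ℝ V).symm (Bc u)‖ = ‖Bc u‖
      exact (toDual ℝ V).symm.norm_map _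
    rw [h1, mul_comm (M / C₁) ‖u‖]
    rw [mul_comm ‖u‖ (M / C₁)]
    exact LinearMap.mkContinuous_norm_le _ (by positivity) _
  let A : U →L[ℝ] V := LinearMap.mkContinuous Alin (M / C₁) hAnorm
  have hA : ∀ u v, ⟪A u, v⟫_ℝ = b u v := hA0
  -- lower bound: ‖u‖ ≤ (C₂/γ) * ‖A u‖
  have hlb : ∀ u : U, ‖u‖ ≤ (C₂ / γ) * ‖A u‖ := by
    intro u
    have hsup : (⨆ v : {v : V // v ≠ 0}, |b u v.1| / Nω v.1) ≤ C₂ * ‖A u‖ := by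
      apply Real.iSup_le
      · rintro ⟨v, hv⟩
        have hN := hNpos v hv
        rw [div_le_iff₀ hN]
        have h1 : |b u v| = |⟪A u, v⟫_ℝ| := by rw [hA]
        have h2 : |⟪A u, v⟫_ℝ| ≤ ‖A u‖ * ‖v‖ := abs_real_inner_le_norm _ _
        have h3 := (hequiv v).2
        nlinarith [norm_nonneg (A u)]
      · positivity
    have h : γ * ‖u‖ ≤ C₂ * ‖A u‖ := le_trans (hlow u) hsup
    rw [div_mul_eq_mul_div, le_div_iff₀ hγ]
    nlinarith
  -- A is antilipschitz, hence has closed range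
  have hanti : AntilipschitzWith ⟨C₂ / γ, by positivity⟩ A :=
    A.antilipschitz_of_bound (fun u => hlb u)
  have hclosed : IsClosed (Set.range A) :=
    hanti.isClosed_range A.uniformContinuous
  -- range as a submodule
  let R : Submodule ℝ V := LinearMap.range (A : U →ₗ[ℝ] V)
  have hRclosed : IsClosed (R : Set V) := by
    have : (R : Set V) = Set.range A := by
      ext v
      simp [R, LinearMap.mem_range]
    rw [this]; exact hclosed
  haveI : CompleteSpace R := hRclosed.completeSpace_coe
  -- Riesz representative of ℓ
  let f : V := (toDual ℝ V).symm ℓ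
  have hf : ∀ v, ⟪f, v⟫_ℝ = ℓ v := fun v => toDual_symm_apply
  -- f ∈ Rᗮᗮ = R
  have hfmem : f ∈ Rᗮᗮ := by
    rw [Submodule.mem_orthogonal]
    intro v hv
    have hbv : ∀ u : U, b u v = 0 := by
      intro u
      rw [← hA]
      exact (Submodule.mem_orthogonal R v).mp hv (A u) ⟨u, rfl⟩
    have : ℓ v = 0 := hℓ v hbv
    rw [real_inner_comm, hf, this]
  rw [Submodule.orthogonal_orthogonal] at hfmem
  obtain ⟨u, hu⟩ := hfmem
  have huA : A u = f := hu
  refine ⟨u, fun v => ?_, fun u' hu' => ?_⟩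
  · rw [← hA, huA, hf]
  · -- uniqueness
    have hz : ∀ v : V, b (u' - u) v = 0 := by
      intro v
      have h1 : b u' v = ℓ v := hu' v
      have h2 : b u v = ℓ v := by rw [← hA, huA, hf]
      simp [map_sub, h1, h2]
    have hsup0 : (⨆ v : {v : V // v ≠ 0}, |b (u' - u) v.1| / Nω v.1) ≤ 0 := by
      apply Real.iSup_le
      · rintro ⟨v, hv⟩
        rw [hz v]
        simp
      · exact le_rfl
    have := le_trans (hlow (u' - u)) hsup0
    have hn : ‖u' - u‖ ≤ 0 := by
      nlinarith [norm_nonneg (u' - u)]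
    have : u' - u = 0 := by
      rw [← norm_le_zero_iff]
      exact hn
    exact sub_eq_zero.mp this
end

section
/- Let U, V be Hilbert spaces, V_h ⊆ V a finite-dimensional subspace with inner product (·,·)_{V,ω}, and b : U × V → ℝ bounded bilinear. Define the discrete trial-to-test operator T_h : U → V_h by (T_h u, v_h)_{V,ω} = b(u, v_h) for all v_h ∈ V_h. If (r_h, u_h) ∈ V_h × U_h solves the mixed system with right-hand side ℓ ∈ V*, then u_h solves the Petrov–Galerkin problem b(u_h, v_h) = ℓ(v_h) for all v_h in the projected optimal test space T_h(U_h). -/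
/-- The second component of the mixed-system solution solves the
Petrov–Galerkin problem with the projected optimal test space `T_h(U_h)`. -/
theorem stmt6
    {U V : Type*} [NormedAddCommGroup U] [InnerProductSpace ℝ U] [CompleteSpace U]
    [NormedAddCommGroup V] [InnerProductSpace ℝ V] [CompleteSpace V]
    (Uh : Submodule ℝ U) (Vh : Submodule ℝ V)
    [FiniteDimensional ℝ Uh] [FiniteDimensional ℝ Vh]
    (ip : V →ₗ[ℝ] V →ₗ[ℝ] ℝ)
    (hsymm : ∀ v w : V, ip v w = ip w v)
    (hpos : ∀ v : V, v ≠ 0 → 0 < ip v v)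
    (b : U →ₗ[ℝ] V →ₗ[ℝ] ℝ)
    (Cb : ℝ) (hb : ∀ (u : U) (v : V), |b u v| ≤ Cb * ‖u‖ * ‖v‖)
    (Th : U →ₗ[ℝ] Vh)
    (hTh : ∀ (u : U) (vh : Vh), ip ((Th u : Vh) : V) (vh : V) = b u (vh : V))
    (ℓ : V →L[ℝ] ℝ)
    (rh : Vh) (uh : Uh)
    (hmixed1 : ∀ vh : Vh, ip (rh : V) (vh : V) + b (uh : U) (vh : V) = ℓ (vh : V))
    (hmixed2 : ∀ wh : Uh, b (wh : U) (rh : V) = 0) :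
    ∀ wh : Uh, b (uh : U) ((Th (wh : U) : Vh) : V) = ℓ ((Th (wh : U) : Vh) : V) := by
  intro wh
  have h1 := hmixed1 (Th (wh : U))
  have h2 : ip (rh : V) ((Th (wh : U) : Vh) : V) = 0 := by
    rw [hsymm, hTh]; exact hmixed2 wh
  linarith
end

section
/- Let V be a Hilbert space with inner product (·,·)_{V,ω}, V_h ⊆ V finite-dimensional, and U_h ⊆ U finite-dimensional. Let R_h : V_h → V_h* be the Riesz map of (·,·)_{V,ω} on V_h, and for w ∈ U define the residual functional ρ_w ∈ V_h* by ρ_w(v_h) = ℓ(v_h) − b(w, v_h). If u_h ∈ U_h minimizes w ↦ ‖ρ_w‖_{(V_h)*_ω} over U_h, where ‖f‖_{(V_h)*_ω} = sup_{v_h ∈ V_h, v_h≠0} |f(v_h)|/‖v_h‖_{V,ω}, and r_h := R_h⁻¹ ρ_{u_h}, then (r_h, u_h) satisfies the mixed system: (r_h, v_h)_{V,ω} + b(u_h, v_h) = ℓ(v_h) for all v_h ∈ V_h, and b(w_h, r_h) = 0 for all w_h ∈ U_h. -/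
open scoped RealInnerProductSpace

lemma stmt8_aux_le {V : Type*} [NormedAddCommGroup V] [InnerProductSpace ℝ V]
    (Vh : Submodule ℝ V) (f : V → ℝ) (r : Vh)
    (hf : ∀ vh : Vh, ⟪(r : V), (vh : V)⟫ = f (vh : V)) :
    (⨆ vh : {v : Vh // v ≠ 0}, |f (vh.1 : V)| / ‖(vh.1 : V)‖) ≤ ‖r‖ := by
  rcases isEmpty_or_nonempty {v : Vh // v ≠ 0} with h | h
  · rw [Real.iSup_of_isEmpty]; positivity
  · apply ciSup_le
    intro vh
    have hv : (vh.1 : V) ≠ 0 := by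
      simpa [Submodule.coe_eq_zero] using vh.2
    have hvn : 0 < ‖(vh.1 : V)‖ := norm_pos_iff.mpr hv
    rw [div_le_iff₀ hvn, ← hf]
    calc |⟪(r : V), (vh.1 : V)⟫| ≤ ‖(r : V)‖ * ‖(vh.1 : V)‖ := abs_real_inner_le_norm _ _
    _ = ‖r‖ * ‖(vh.1 : V)‖ := rfl

lemma stmt8_aux_ge {V : Type*} [NormedAddCommGroup V] [InnerProductSpace ℝ V]
    (Vh : Submodule ℝ V) (f : V → ℝ) (r : Vh) (hr : r ≠ 0)
    (hf : ∀ vh : Vh, ⟪(r : V), (vh : V)⟫ = f (vh : V)) :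
    ‖r‖ ≤ ⨆ vh : {v : Vh // v ≠ 0}, |f (vh.1 : V)| / ‖(vh.1 : V)‖ := by
  have bdd : BddAbove (Set.range fun vh : {v : Vh // v ≠ 0} =>
      |f (vh.1 : V)| / ‖(vh.1 : V)‖) := by
    refine ⟨‖r‖, ?_⟩
    rintro x ⟨vh, rfl⟩
    have hv : (vh.1 : V) ≠ 0 := by
      simpa [Submodule.coe_eq_zero] using vh.2
    have hvn : 0 < ‖(vh.1 : V)‖ := norm_pos_iff.mpr hv
    rw [div_le_iff₀ hvn, ← hf]
    calc |⟪(r : V), (vh.1 : V)⟫| ≤ ‖(r : V)‖ * ‖(vh.1 : V)‖ := abs_real_inner_le_norm _ _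
    _ = ‖r‖ * ‖(vh.1 : V)‖ := rfl
  have h1 := le_ciSup bdd ⟨r, hr⟩
  have hrn : 0 < ‖(r : V)‖ := by
    rw [norm_pos_iff]
    simpa [Submodule.coe_eq_zero] using hr
  have h2 : |f (r : V)| / ‖(r : V)‖ = ‖r‖ := by
    rw [← hf r, real_inner_self_eq_norm_sq, abs_of_nonneg (by positivity)]
    show ‖(r : V)‖ ^ 2 / ‖(r : V)‖ = ‖(r : V)‖
    field_simp
  rw [h2] at h1
  exact h1

/-- Residual minimization in the discrete dual norm, together with
the Riesz representative `r_h = R_h⁻¹ ρ_{u_h}`, yields the mixed system. The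
weighted inner product on `V` is modelled by the inner product of `V`. -/
theorem stmt8
    {U V : Type*} [NormedAddCommGroup U] [InnerProductSpace ℝ U] [CompleteSpace U]
    [NormedAddCommGroup V] [InnerProductSpace ℝ V] [CompleteSpace V]
    (Uh : Submodule ℝ U) (Vh : Submodule ℝ V)
    [FiniteDimensional ℝ Uh] [FiniteDimensional ℝ Vh]
    (b : U →ₗ[ℝ] V →ₗ[ℝ] ℝ) (ℓ : V →L[ℝ] ℝ)
    (uh : Uh)
    (hmin : ∀ wh : Uh,
      (⨆ vh : {v : Vh // v ≠ 0}, |ℓ (vh.1 : V) - b (uh : U) (vh.1 : V)| / ‖(vh.1 : V)‖) ≤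
        ⨆ vh : {v : Vh // v ≠ 0}, |ℓ (vh.1 : V) - b (wh : U) (vh.1 : V)| / ‖(vh.1 : V)‖)
    (rh : Vh)
    (hrh : ∀ vh : Vh, ⟪(rh : V), (vh : V)⟫ = ℓ (vh : V) - b (uh : U) (vh : V)) :
    (∀ vh : Vh, ⟪(rh : V), (vh : V)⟫ + b (uh : U) (vh : V) = ℓ (vh : V)) ∧
    (∀ wh : Uh, b (wh : U) (rh : V) = 0) := by
  constructor
  · intro vh
    rw [hrh vh]; ring
  · intro wh
    by_cases hrz : rh = 0
    · subst hrz
      simp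
    -- Riesz representative of vh ↦ b wh vh on Vh
    obtain ⟨s, hsrep⟩ : ∃ s : Vh, ∀ vh : Vh, ⟪(s : V), (vh : V)⟫ = b (wh : U) (vh : V) := by
      set L : Vh →L[ℝ] ℝ :=
        LinearMap.toContinuousLinearMap ((b (wh : U)).comp Vh.subtype) with hL
      refine ⟨(InnerProductSpace.toDual ℝ Vh).symm L, fun vh => ?_⟩
      have h1 : (inner ℝ ((InnerProductSpace.toDual ℝ Vh).symm L) vh : ℝ) = L vh :=
        InnerProductSpace.toDual_symm_apply (𝕜 := ℝ) (E := Vh) (x := vh) (y := L)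
      have h2 : L vh = b (wh : U) (vh : V) := by
        rw [hL]
        simp [LinearMap.coe_toContinuousLinearMap]
      rw [← h2, ← h1, Submodule.coe_inner]
    have key : ∀ t : ℝ, ‖rh‖ ≤ ‖rh - t • s‖ := by
      intro t
      have hrep : ∀ vh : Vh, ⟪((rh - t • s : Vh) : V), (vh : V)⟫ =
          ℓ (vh : V) - b ((uh + t • wh : Uh) : U) (vh : V) := by
        intro vh
        have hcV : ((rh - t • s : Vh) : V) = (rh : V) - t • (s : V) := by
          push_cast; ring
        have hcU : ((uh + t • wh : Uh) : U) = (uh : U) + t • (wh : U) := by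
          push_cast; ring
        rw [hcV, inner_sub_left, real_inner_smul_left, hrh vh, hsrep vh, hcU,
          map_add, map_smul, LinearMap.add_apply, LinearMap.smul_apply, smul_eq_mul]
        ring
      calc ‖rh‖ ≤ ⨆ vh : {v : Vh // v ≠ 0},
            |ℓ (vh.1 : V) - b (uh : U) (vh.1 : V)| / ‖(vh.1 : V)‖ :=
          stmt8_aux_ge Vh (fun x => ℓ x - b (uh : U) x) rh hrz hrh
        _ ≤ ⨆ vh : {v : Vh // v ≠ 0},
            |ℓ (vh.1 : V) - b ((uh + t • wh : Uh) : U) (vh.1 : V)| / ‖(vh.1 : V)‖ :=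
          hmin _
        _ ≤ ‖rh - t • s‖ := stmt8_aux_le Vh (fun x => ℓ x - b ((uh + t • wh : Uh) : U) x) _ hrep
    -- deduce ⟪rh, s⟫ = 0
    have hc : (inner ℝ rh s : ℝ) = 0 := by
      by_contra hc
      set c := (inner ℝ rh s : ℝ) with hcdef
      have hsq : ∀ t : ℝ, ‖rh‖ ^ 2 ≤ ‖rh‖ ^ 2 - 2 * t * c + t ^ 2 * ‖s‖ ^ 2 := by
        intro t
        have h := key t
        have h2 : ‖rh‖ ^ 2 ≤ ‖rh - t • s‖ ^ 2 := by
          have := norm_nonneg (rh - t • s)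
          nlinarith [key t, norm_nonneg rh]
        calc ‖rh‖ ^ 2 ≤ ‖rh - t • s‖ ^ 2 := h2
          _ = ‖rh‖ ^ 2 - 2 * t * c + t ^ 2 * ‖s‖ ^ 2 := by
            rw [norm_sub_sq_real, real_inner_smul_right, norm_smul]
            simp [hcdef, sq_abs, mul_pow]
            ring
      set K : ℝ := ‖s‖ ^ 2 + 1 with hK
      have hKpos : 0 < K := by positivity
      set t : ℝ := c / K with ht
      have htK : t * K = c := div_mul_cancel₀ c (ne_of_gt hKpos)
      have ht0 : t ≠ 0 := by
        intro h0
        rw [h0, zero_mul] at htK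
        exact hc htK.symm
      have ht2 : 0 < t ^ 2 := by positivity
      have := hsq t
      have hs2 : ‖s‖ ^ 2 = K - 1 := by rw [hK]; ring
      rw [← htK, hs2] at this
      nlinarith [this, ht2, hKpos, mul_pos ht2 hKpos]
    have : b (wh : U) (rh : V) = ⟪(s : V), (rh : V)⟫ := (hsrep rh).symm
    rw [this, real_inner_comm]
    rw [Submodule.coe_inner] at hc
    exact hc
end

section
/- Let U_h ⊆ U and V_h ⊆ V be finite-dimensional subspaces with dim V_h = dim U_h, and suppose b satisfies the discrete inf-sup condition on the pair U_h–V_h. Then the solution (r_h, u_h) of the mixed system has r_h = 0, and u_h coincides with the standard Petrov–Galerkin solution: b(u_h, v_h) = ℓ(v_h) for all v_h ∈ V_h, independent of the choice of the inner product (·,·)_{V,ω} on V_h. -/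
/-- when `dim V_h = dim U_h` and the discrete inf-sup condition
holds, the mixed system forces `r_h = 0` and `u_h` is the standard
Petrov–Galerkin solution, independently of the weighted inner product `ip`. -/
theorem stmt19
    {U V : Type*} [NormedAddCommGroup U] [InnerProductSpace ℝ U] [CompleteSpace U]
    [NormedAddCommGroup V] [InnerProductSpace ℝ V] [CompleteSpace V]
    (Uh : Submodule ℝ U) (Vh : Submodule ℝ V)
    [FiniteDimensional ℝ Uh] [FiniteDimensional ℝ Vh]
    (hdim : Module.finrank ℝ Vh = Module.finrank ℝ Uh)
    (ip : V →ₗ[ℝ] V →ₗ[ℝ] ℝ)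
    (hsymm : ∀ v w : V, ip v w = ip w v)
    (hpos : ∀ v : V, v ≠ 0 → 0 < ip v v)
    (b : U →ₗ[ℝ] V →ₗ[ℝ] ℝ)
    (Cb : ℝ) (hb : ∀ (u : U) (v : V), |b u v| ≤ Cb * ‖u‖ * ‖v‖)
    (γh : ℝ) (hγh : 0 < γh)
    (hinfsup : ∀ uh : Uh, γh * ‖(uh : U)‖ ≤
      ⨆ vh : {v : Vh // v ≠ 0}, |b uh (vh.1 : V)| / Real.sqrt (ip (vh.1 : V) (vh.1 : V)))
    (ℓ : V →L[ℝ] ℝ)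
    (rh : Vh) (uh : Uh)
    (hmixed1 : ∀ vh : Vh, ip (rh : V) (vh : V) + b (uh : U) (vh : V) = ℓ (vh : V))
    (hmixed2 : ∀ wh : Uh, b (wh : U) (rh : V) = 0) :
    rh = 0 ∧ ∀ vh : Vh, b (uh : U) (vh : V) = ℓ (vh : V) := by
  -- The discrete operator S : Uh → Dual Vh
  set S : Uh →ₗ[ℝ] Module.Dual ℝ Vh := b.compl₁₂ Uh.subtype Vh.subtype with hS
  have hSinj : Function.Injective S := by
    rw [← LinearMap.ker_eq_bot]
    rw [LinearMap.ker_eq_bot']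
    intro u hu
    have hzero : ∀ v : Vh, b (u : U) (v : V) = 0 := by
      intro v
      have := congrFun (congrArg (fun f => f.toFun) hu) v
      simpa [hS, LinearMap.compl₁₂] using this
    have hsup :
        (⨆ vh : {v : Vh // v ≠ 0},
          |b (u : U) (vh.1 : V)| / Real.sqrt (ip (vh.1 : V) (vh.1 : V))) = 0 := by
      have hfun : (fun vh : {v : Vh // v ≠ 0} =>
          |b (u : U) (vh.1 : V)| / Real.sqrt (ip (vh.1 : V) (vh.1 : V)))
          = fun _ => (0 : ℝ) := by
        funext vh
        rw [hzero vh.1]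
        simp
      rw [hfun]
      by_cases h : Nonempty {v : Vh // v ≠ 0}
      · exact ciSup_const
      · haveI : IsEmpty {v : Vh // v ≠ 0} := not_nonempty_iff.mp h
        exact Real.iSup_of_isEmpty _
    have := hinfsup u
    rw [hsup] at this
    have hnorm : ‖(u : U)‖ ≤ 0 := by
      nlinarith [norm_nonneg (u : U)]
    have : (u : U) = 0 := norm_le_zero_iff.mp hnorm
    exact Subtype.ext this
  have hSsurj : Function.Surjective S := by
    have hd : Module.finrank ℝ Uh = Module.finrank ℝ (Module.Dual ℝ Vh) := by
      rw [Subspace.dual_finrank_eq, hdim]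
    exact (LinearMap.injective_iff_surjective_of_finrank_eq_finrank hd).mp hSinj
  have hrh : rh = 0 := by
    apply (Module.forall_dual_apply_eq_zero_iff ℝ rh).mp
    intro φ
    obtain ⟨w, hw⟩ := hSsurj φ
    rw [← hw]
    simpa [hS, LinearMap.compl₁₂] using hmixed2 w
  refine ⟨hrh, fun vh => ?_⟩
  have := hmixed1 vh
  rw [hrh] at this
  simpa using this
end
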